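/- arXiv:1301.0810 — 2 statements merged into one kernel-verified Lean document; each statement's English description precedes it below -/
import Mathlib

section
/- Let X be a two-dimensional real normed space and let K, A ⊂ X satisfy condition (H) with A + (K \ {0}) ⊂ int_K A. If for all a, a' ∈ A ∩ int K with a ≠ a' and all λ ∈ (0,1) one has λa + (1−λ)a' ∈ int A, then A is convex, for all x, x' ∈ A with x ≠ x' and all λ ∈ (0,1) one has λx + (1−λ)x' ∈ A + (A_∞ \ {0}), and σ_A is (Fréchet) differentiable at every point of int K⁻. -/
open Set Filter Topology Pointwise

variable {X : Type*} [NormedAddCommGroup X] [NormedSpace ℝ X]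

/-- The support function `σ_A : X* → ℝ ∪ {+∞}`. -/
noncomputable def supportFn (A : Set X) (f : X →L[ℝ] ℝ) : EReal :=
  ⨆ a ∈ A, (f a : EReal)

/-- The negative dual cone `K⁻ = {x* : ⟨k, x*⟩ ≤ 0 for all k ∈ K}`. -/
def negDual (K : Set X) : Set (X →L[ℝ] ℝ) := {f | ∀ x ∈ K, f x ≤ 0}

/-- `σ_A` is (Fréchet) differentiable at `f`: there is a real-valued function agreeing
with `σ_A` on a neighbourhood of `f` which is differentiable at `f`. -/
def SigmaDiffAt (A : Set X) (f : X →L[ℝ] ℝ) : Prop :=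
  ∃ g : (X →L[ℝ] ℝ) → ℝ, (∀ᶠ y in 𝓝 f, ((g y : ℝ) : EReal) = supportFn A y) ∧
    DifferentiableAt ℝ g f

/-- `int_K A`: the interior of `A` in the subspace topology of `K`. -/
def intWithin (K A : Set X) : Set X :=
  {x ∈ K | ∃ U : Set X, IsOpen U ∧ x ∈ U ∧ K ∩ U ⊆ A}

/-- The recession cone `S_∞` of a set `S`. -/
def recessionCone (S : Set X) : Set X :=
  {u | ∃ t : ℕ → ℝ, (∀ n, 0 < t n) ∧ Tendsto t atTop (𝓝 0) ∧
       ∃ a : ℕ → X, (∀ n, a n ∈ S) ∧ Tendsto (fun n => t n • a n) atTop (𝓝 u)}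

/-!
Translating two points of `A` by a small vector of `int K` puts them in `A ∩ int K`, so the
segment between the translates lies in `int A`; letting the translation tend to `0` shows that
`A` is convex. In dimension two, an open segment between two linearly independent points of `K`
lies in `int K`, so applying the hypothesis to two points of a segment of `A` on either side of
a point `z` puts `z` in `int A`, whence `z = (1 - δ) z + δ z ∈ A + (K \ {0})`; a segment between
dependent points lies on a ray and the claim is immediate. As `A_∞ = K`, a functional `y` near
`f ∈ int K⁻` is uniformly negative on `K`, so the supremum of `y` over `A` is attained on a fixed
compact piece `C` of `A`. The segment property makes the maximizer `â` of `f` unique, and then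
`y ↦ max_C y` is differentiable at `f` with derivative `y ↦ y â` (Danskin).
-/

section Cone

variable {K : Set X}

theorem add_mem_of_convex_of_smul_mem (hKconv : Convex ℝ K)
    (hKcone : ∀ t : ℝ, 0 ≤ t → ∀ x ∈ K, t • x ∈ K) {x y : X} (hx : x ∈ K) (hy : y ∈ K) :
    x + y ∈ K := by
  have hmid : (1 / 2 : ℝ) • x + (1 / 2 : ℝ) • y ∈ K :=
    hKconv hx hy (by norm_num) (by norm_num) (by norm_num)
  convert hKcone 2 zero_le_two _ hmid using 1
  module

theorem add_mem_interior_of_convex_of_smul_mem (hKconv : Convex ℝ K)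
    (hKcone : ∀ t : ℝ, 0 ≤ t → ∀ x ∈ K, t • x ∈ K) {x e : X} (hx : x ∈ K)
    (he : e ∈ interior K) : x + e ∈ interior K := by
  have hsub : x +ᵥ interior K ⊆ K := by
    rintro - ⟨w, hw, rfl⟩
    exact add_mem_of_convex_of_smul_mem hKconv hKcone hx (interior_subset hw)
  exact interior_maximal hsub (isOpen_interior.vadd x) (vadd_mem_vadd_set he)

theorem smul_mem_interior_of_smul_mem (hKcone : ∀ t : ℝ, 0 ≤ t → ∀ x ∈ K, t • x ∈ K)
    {t : ℝ} (ht : 0 < t) {e : X} (he : e ∈ interior K) : t • e ∈ interior K := by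
  have hsub : t • interior K ⊆ K := by
    rintro - ⟨w, hw, rfl⟩
    exact hKcone t ht.le w (interior_subset hw)
  exact interior_maximal hsub (isOpen_interior.smul₀ ht.ne') (smul_mem_smul_set he)

theorem smul_add_smul_mem_interior_of_linearIndependent (hdim : Module.finrank ℝ X = 2)
    (hKconv : Convex ℝ K) (hKcone : ∀ t : ℝ, 0 ≤ t → ∀ x ∈ K, t • x ∈ K) {x y : X}
    (hx : x ∈ K) (hy : y ∈ K) (hxy : LinearIndependent ℝ ![x, y]) {a b : ℝ} (ha : 0 < a)
    (hb : 0 < b) : a • x + b • y ∈ interior K := by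
  have : FiniteDimensional ℝ X := .of_finrank_eq_succ hdim
  have hcard : Fintype.card (Fin 2) = Module.finrank ℝ X := by simp [hdim]
  set B := basisOfLinearIndependentOfCardEqFinrank hxy hcard
  have hB : ⇑B = ![x, y] := coe_basisOfLinearIndependentOfCardEqFinrank hxy hcard
  set Q := {u : X | 0 < B.coord 0 u ∧ 0 < B.coord 1 u}
  have hQopen : IsOpen Q :=
    (isOpen_lt continuous_const (B.coord 0).continuous_of_finiteDimensional).inter
      (isOpen_lt continuous_const (B.coord 1).continuous_of_finiteDimensional)
  have hQK : Q ⊆ K := by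
    intro u hu
    rw [← B.sum_repr u, Fin.sum_univ_two, hB]
    exact add_mem_of_convex_of_smul_mem hKconv hKcone (hKcone _ hu.1.le x hx)
      (hKcone _ hu.2.le y hy)
  refine interior_maximal hQK hQopen ?_
  have hxy' : a • x + b • y = a • B 0 + b • B 1 := by simp [hB]
  simp [Q, hxy', ha, hb]

end Cone

section Recession

variable {K A : Set X}

theorem subset_recessionCone (hKcone : ∀ t : ℝ, 0 ≤ t → ∀ x ∈ K, t • x ∈ K)
    (hAK : A + K ⊆ A) (hAne : A.Nonempty) : K ⊆ recessionCone A := by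
  obtain ⟨a₀, ha₀⟩ := hAne
  intro u hu
  refine ⟨fun n => 1 / ((n : ℝ) + 1), fun n => by positivity,
    tendsto_one_div_add_atTop_nhds_zero_nat, fun n => a₀ + ((n : ℝ) + 1) • u,
    fun n => hAK (add_mem_add ha₀ (hKcone _ (by positivity) u hu)), ?_⟩
  have hlim : Tendsto (fun n : ℕ => (1 / ((n : ℝ) + 1)) • a₀ + u) atTop (𝓝 u) := by
    simpa using ((tendsto_one_div_add_atTop_nhds_zero_nat (𝕜 := ℝ)).smul_const a₀).add_const u
  refine hlim.congr fun n => ?_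
  have hn : (n : ℝ) + 1 ≠ 0 := by positivity
  simp [smul_add, smul_smul, hn]

theorem recessionCone_subset (hKclosed : IsClosed K)
    (hKcone : ∀ t : ℝ, 0 ≤ t → ∀ x ∈ K, t • x ∈ K) (hAK : A ⊆ K) : recessionCone A ⊆ K := by
  rintro u ⟨t, htpos, -, a, haA, hlim⟩
  exact hKclosed.mem_of_tendsto hlim
    (Eventually.of_forall fun n => hKcone _ (htpos n).le _ (hAK (haA n)))

end Recession

section Segment

variable {K A : Set X}

theorem convex_of_openSegment_subset_interior (hKconv : Convex ℝ K)
    (hKcone : ∀ t : ℝ, 0 ≤ t → ∀ x ∈ K, t • x ∈ K) (hKint : (interior K).Nonempty)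
    (hAclosed : IsClosed A) (hAK : A + K ⊆ A) (hAsubK : A ⊆ K)
    (hsa : ∀ a ∈ A ∩ interior K, ∀ a' ∈ A ∩ interior K, a ≠ a' →
      ∀ t : ℝ, t ∈ Ioo (0 : ℝ) 1 → t • a + (1 - t) • a' ∈ interior A) :
    Convex ℝ A := by
  rw [convex_iff_forall_pos]
  intro x hx y hy a b ha hb hab
  rcases eq_or_ne x y with rfl | hxy
  · rwa [← add_smul, hab, one_smul]
  obtain ⟨e, he⟩ := hKint
  have hshift : ∀ ε : ℝ, 0 < ε → a • x + b • y + ε • e ∈ A := by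
    intro ε hε
    have hεe : ε • e ∈ interior K := smul_mem_interior_of_smul_mem hKcone hε he
    have hshift_mem : ∀ z ∈ A, z + ε • e ∈ A ∩ interior K := fun z hz =>
      ⟨hAK (add_mem_add hz (interior_subset hεe)),
        add_mem_interior_of_convex_of_smul_mem hKconv hKcone (hAsubK hz) hεe⟩
    have hmem := hsa _ (hshift_mem x hx) _ (hshift_mem y hy) (by simpa using hxy) a
      ⟨ha, by linarith⟩
    convert interior_subset hmem using 1
    rw [eq_sub_of_add_eq' hab]
    module
  have hlim : Tendsto (fun ε : ℝ => a • x + b • y + ε • e) (𝓝[>] 0) (𝓝 (a • x + b • y)) := by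
    have : Continuous (fun ε : ℝ => a • x + b • y + ε • e) := by fun_prop
    simpa using this.continuousWithinAt.tendsto (s := Ioi 0) (x := 0)
  exact hAclosed.mem_of_tendsto hlim (eventually_nhdsWithin_of_forall hshift)

theorem mem_add_diff_zero_of_mem_interior (hKcone : ∀ t : ℝ, 0 ≤ t → ∀ x ∈ K, t • x ∈ K)
    {z : X} (hz : z ∈ interior A) (hzK : z ∈ K \ {0}) : z ∈ A + (K \ {0}) := by
  have hlim : Tendsto (fun δ : ℝ => (1 - δ) • z) (𝓝[>] 0) (𝓝 z) := by
    have : Continuous (fun δ : ℝ => (1 - δ) • z) := by fun_prop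
    simpa using this.continuousWithinAt.tendsto (s := Ioi 0) (x := 0)
  obtain ⟨δ, hδA, hδ⟩ :=
    ((hlim.eventually (isOpen_interior.mem_nhds hz)).and self_mem_nhdsWithin).exists
  have hδ0 : 0 < δ := hδ
  have hz0 : z ≠ 0 := hzK.2
  exact ⟨(1 - δ) • z, interior_subset hδA, δ • z,
    ⟨hKcone δ hδ0.le z hzK.1, smul_ne_zero hδ0.ne' hz0⟩, by module⟩

theorem smul_add_one_sub_smul_mem_interior_of_linearIndependent
    (hdim : Module.finrank ℝ X = 2) (hKconv : Convex ℝ K)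
    (hKcone : ∀ t : ℝ, 0 ≤ t → ∀ x ∈ K, t • x ∈ K) (hAconv : Convex ℝ A) (hAsubK : A ⊆ K)
    (hsa : ∀ a ∈ A ∩ interior K, ∀ a' ∈ A ∩ interior K, a ≠ a' →
      ∀ t : ℝ, t ∈ Ioo (0 : ℝ) 1 → t • a + (1 - t) • a' ∈ interior A)
    {x x' : X} (hx : x ∈ A) (hx' : x' ∈ A) (hLI : LinearIndependent ℝ ![x, x'])
    {t : ℝ} (ht : t ∈ Ioo (0 : ℝ) 1) : t • x + (1 - t) • x' ∈ interior A := by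
  have hopen : ∀ s ∈ Ioo (0 : ℝ) 1, s • x + (1 - s) • x' ∈ A ∩ interior K := fun s hs =>
    ⟨hAconv hx hx' hs.1.le (by linarith [hs.2]) (by ring),
      smul_add_smul_mem_interior_of_linearIndependent hdim hKconv hKcone (hAsubK hx)
        (hAsubK hx') hLI hs.1 (by linarith [hs.2])⟩
  have hxx' : x ≠ x' := by simpa using hLI.injective.ne (show (0 : Fin 2) ≠ 1 by decide)
  obtain ⟨ht0, ht1⟩ := ht
  -- the points of parameters `t / 2 < t < (1 + t) / 2`, with weights `1 - t` and `t`, average to `t`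
  have hmem := hsa _ (hopen (t / 2) ⟨by linarith, by linarith⟩)
    _ (hopen ((1 + t) / 2) ⟨by linarith, by linarith⟩)
    (fun h => hxx' (by linear_combination (norm := module) (-2 : ℝ) • h))
    (1 - t) ⟨by linarith, by linarith⟩
  convert hmem using 1
  module

theorem smul_add_one_sub_smul_mem_add_of_not_linearIndependent
    (hKcone : ∀ t : ℝ, 0 ≤ t → ∀ x ∈ K, t • x ∈ K) (hKpointed : K ∩ (-K) = {0})
    (hAsub : A ⊆ K \ {0}) {x x' : X} (hx : x ∈ A) (hx' : x' ∈ A) (hne : x ≠ x')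
    (hLI : ¬ LinearIndependent ℝ ![x, x']) {t : ℝ} (ht : t ∈ Ioo (0 : ℝ) 1) :
    t • x + (1 - t) • x' ∈ A + (K \ {0}) := by
  obtain ⟨hxK, hx0⟩ := hAsub hx
  obtain ⟨hx'K, hx'0⟩ := hAsub hx'
  rw [mem_singleton_iff] at hx0 hx'0
  rw [LinearIndependent.pair_iff' hx0] at hLI
  push Not at hLI
  obtain ⟨c, rfl⟩ := hLI
  have hc0 : 0 < c := by
    by_contra! hc0
    have hmem : c • x ∈ K ∩ (-K) :=
      ⟨hx'K, by rw [Set.mem_neg, ← neg_smul]; exact hKcone _ (by linarith) x hxK⟩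
    rw [hKpointed] at hmem
    exact hx'0 hmem
  have hc1 : c ≠ 1 := by rintro rfl; exact hne (one_smul ℝ x).symm
  obtain ⟨ht0, ht1⟩ := ht
  have hray : ∀ s : ℝ, 0 < s → s • x ∈ K \ {0} := fun s hs =>
    ⟨hKcone s hs.le x hxK, by simp [hs.ne', hx0]⟩
  rcases lt_or_gt_of_ne hc1 with hc1 | hc1
  · exact ⟨c • x, hx', (t * (1 - c)) • x, hray _ (by nlinarith), by module⟩
  · exact ⟨x, hx, ((1 - t) * (c - 1)) • x, hray _ (by nlinarith), by module⟩

theorem smul_add_one_sub_smul_mem_add_of_ne (hdim : Module.finrank ℝ X = 2)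
    (hKconv : Convex ℝ K) (hKcone : ∀ t : ℝ, 0 ≤ t → ∀ x ∈ K, t • x ∈ K)
    (hKpointed : K ∩ (-K) = {0}) (hAconv : Convex ℝ A) (hAsub : A ⊆ K \ {0})
    (hsa : ∀ a ∈ A ∩ interior K, ∀ a' ∈ A ∩ interior K, a ≠ a' →
      ∀ t : ℝ, t ∈ Ioo (0 : ℝ) 1 → t • a + (1 - t) • a' ∈ interior A) :
    ∀ x ∈ A, ∀ x' ∈ A, x ≠ x' → ∀ t : ℝ, t ∈ Ioo (0 : ℝ) 1 →
      t • x + (1 - t) • x' ∈ A + (K \ {0}) := by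
  intro x hx x' hx' hne t ht
  by_cases hLI : LinearIndependent ℝ ![x, x']
  · exact mem_add_diff_zero_of_mem_interior hKcone
      (smul_add_one_sub_smul_mem_interior_of_linearIndependent hdim hKconv hKcone hAconv
        (fun a ha => (hAsub ha).1) hsa hx hx' hLI ht)
      (hAsub (hAconv hx hx' ht.1.le (by linarith [ht.2]) (by ring)))
  · exact smul_add_one_sub_smul_mem_add_of_not_linearIndependent hKcone hKpointed hAsub hx hx'
      hne hLI ht

end Segment

section Danskin

variable {C : Set X}

theorem IsCompact.eventually_forall_norm_sub_lt (hC : IsCompact C) {f : X →L[ℝ] ℝ} {â : X}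
    (huniq : ∀ a ∈ C, f â ≤ f a → a = â) {ε : ℝ} (hε : 0 < ε) :
    ∀ᶠ y in 𝓝 f, ∀ a ∈ C, y â ≤ y a → ‖a - â‖ < ε := by
  have hfar : ∀ᶠ y in 𝓝 f, ∀ a ∈ C \ Metric.ball â ε, y a < y â := by
    refine (hC.diff Metric.isOpen_ball).eventually_forall_of_forall_eventually fun a ha => ?_
    have hlt : f a < f â := lt_of_not_ge fun hle =>
      ha.2 (by rw [huniq a ha.1 hle]; exact Metric.mem_ball_self hε)
    exact (isOpen_lt (continuous_fst.clm_apply continuous_snd)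
      (continuous_fst.clm_apply continuous_const)).mem_nhds hlt
  filter_upwards [hfar] with y hy a ha hle
  by_contra hfar_a
  exact (hy a ⟨ha, by simpa [dist_eq_norm] using hfar_a⟩).not_ge hle

theorem IsCompact.hasFDerivAt_sSup_image (hC : IsCompact C) {f : X →L[ℝ] ℝ} {â : X}
    (hâ : â ∈ C) (huniq : ∀ a ∈ C, f â ≤ f a → a = â) :
    HasFDerivAt (fun y : X →L[ℝ] ℝ => sSup (y '' C)) (ContinuousLinearMap.apply ℝ ℝ â) f := by
  have hCne : C.Nonempty := ⟨â, hâ⟩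
  have hfmax : ∀ a ∈ C, f a ≤ f â := fun a ha =>
    le_of_not_gt fun hlt => hlt.ne (by rw [huniq a ha hlt.le])
  have hf : sSup (f '' C) = f â :=
    IsGreatest.csSup_eq ⟨mem_image_of_mem f hâ, forall_mem_image.2 hfmax⟩
  refine .of_isLittleO (Asymptotics.isLittleO_iff.mpr fun ε hε => ?_)
  filter_upwards [hC.eventually_forall_norm_sub_lt huniq hε] with y hy
  obtain ⟨a, haC, hya, hmax⟩ := hC.exists_sSup_image_eq_and_ge hCne y.continuous.continuousOn
  have hle : f a ≤ f â := hfmax a haC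
  have hgap : y a - y â ≤ ‖y - f‖ * ε :=
    calc y a - y â ≤ (y - f) (a - â) := by simp only [sub_apply, map_sub]; linarith
      _ ≤ ‖y - f‖ * ‖a - â‖ := le_trans (le_abs_self _) ((y - f).le_opNorm _)
      _ ≤ ‖y - f‖ * ε := by gcongr; exact (hy a haC (hmax â hâ)).le
  have hnonneg : 0 ≤ y a - y â := sub_nonneg.mpr (hmax â hâ)
  simp only [ContinuousLinearMap.apply_apply, sub_apply, hya, hf, Real.norm_eq_abs]
  rw [show y a - f â - (y â - f â) = y a - y â by ring, abs_of_nonneg hnonneg]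
  linarith

end Danskin

section Support

variable {A : Set X}

theorem supportFn_eq_of_forall_le {y : X →L[ℝ] ℝ} {a : X} (ha : a ∈ A)
    (hmax : ∀ b ∈ A, y b ≤ y a) : supportFn A y = y a :=
  le_antisymm (iSup₂_le fun b hb => EReal.coe_le_coe_iff.mpr (hmax b hb))
    (le_iSup₂_of_le a ha le_rfl)

theorem exists_le_neg_mul_norm_of_mem_interior_negDual {K : Set X} {f : X →L[ℝ] ℝ}
    (hf : f ∈ interior (negDual K)) :
    ∃ r > 0, ∀ y ∈ Metric.closedBall f r, ∀ k ∈ K, y k ≤ -r * ‖k‖ := by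
  obtain ⟨ε, hε, hball⟩ := Metric.mem_nhds_iff.mp (mem_interior_iff_mem_nhds.mp hf)
  refine ⟨ε / 3, by positivity, fun y hy k hk => ?_⟩
  obtain ⟨g, hg1, hgk⟩ := exists_dual_vector'' ℝ k
  have hmem : y + (ε / 3) • g ∈ Metric.ball f ε := by
    rw [Metric.mem_closedBall] at hy
    rw [Metric.mem_ball]
    calc dist (y + (ε / 3) • g) f ≤ dist (y + (ε / 3) • g) y + dist y f := dist_triangle _ _ _
      _ ≤ ε / 3 + ε / 3 := by
        gcongr
        rw [dist_self_add_left, norm_smul, Real.norm_of_nonneg (by positivity)]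
        exact mul_le_of_le_one_right (by positivity) hg1
      _ < ε := by linarith
  have hneg := hball hmem k hk
  simp only [add_apply, smul_apply, smul_eq_mul] at hneg
  have hgk' : g k = ‖k‖ := hgk
  rw [hgk'] at hneg
  linarith

theorem exists_isCompact_forall_exists_le [ProperSpace X] (hAclosed : IsClosed A)
    (hAne : A.Nonempty) {f : X →L[ℝ] ℝ} {r : ℝ} (hr : 0 < r)
    (hneg : ∀ y ∈ Metric.closedBall f r, ∀ a ∈ A, y a ≤ -r * ‖a‖) :
    ∃ C ⊆ A, IsCompact C ∧ C.Nonempty ∧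
      ∀ y ∈ Metric.closedBall f r, ∀ a ∈ A, ∃ c ∈ C, y a ≤ y c := by
  obtain ⟨a₀, ha₀⟩ := hAne
  set R := (‖f‖ + r) * ‖a₀‖ / r with hR
  have hrR : r * R = (‖f‖ + r) * ‖a₀‖ := by rw [hR]; field_simp
  have ha₀C : a₀ ∈ A ∩ Metric.closedBall 0 R := by
    refine ⟨ha₀, mem_closedBall_zero_iff.mpr ?_⟩
    nlinarith [norm_nonneg f, norm_nonneg a₀]
  refine ⟨A ∩ Metric.closedBall 0 R, inter_subset_left,
    (isCompact_closedBall 0 R).inter_left hAclosed, ⟨a₀, ha₀C⟩, fun y hy a ha => ?_⟩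
  by_cases haR : ‖a‖ ≤ R
  · exact ⟨a, ⟨ha, mem_closedBall_zero_iff.mpr haR⟩, le_rfl⟩
  refine ⟨a₀, ha₀C, ?_⟩
  have hy_norm : ‖y‖ ≤ ‖f‖ + r := norm_le_of_mem_closedBall hy
  have hya₀ : -(‖y‖ * ‖a₀‖) ≤ y a₀ := neg_le_of_abs_le (y.le_opNorm a₀)
  calc y a ≤ -r * ‖a‖ := hneg y hy a ha
    _ ≤ -(r * R) := by nlinarith
    _ ≤ -(‖y‖ * ‖a₀‖) := by rw [hrR]; nlinarith [norm_nonneg a₀]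
    _ ≤ y a₀ := hya₀

end Support

section Differentiability

variable {A : Set X} {f : X →L[ℝ] ℝ}

theorem eq_of_forall_le_of_forall_mem_add {D : Set X}
    (hseg : ∀ x ∈ A, ∀ x' ∈ A, x ≠ x' → ∀ t : ℝ, t ∈ Ioo (0 : ℝ) 1 →
      t • x + (1 - t) • x' ∈ A + D)
    (hD : ∀ u ∈ D, f u < 0) {a a' : X} (ha : a ∈ A) (ha' : a' ∈ A)
    (hmax : ∀ b ∈ A, f b ≤ f a) (hle : f a ≤ f a') : a' = a := by
  by_contra hne
  obtain ⟨b, hb, u, hu, hsum⟩ := hseg a' ha' a ha hne (1 / 2) ⟨by norm_num, by norm_num⟩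
  have hfsum := congrArg f hsum
  simp only [map_add, map_smul, smul_eq_mul] at hfsum
  linarith [hmax b hb, hD u hu]

theorem sigmaDiffAt_of_isCompact {C : Set X} (hCA : C ⊆ A) (hC : IsCompact C)
    (hCne : C.Nonempty) (hloc : ∀ᶠ y in 𝓝 f, ∀ a ∈ A, ∃ c ∈ C, y a ≤ y c)
    (huniq : ∀ a ∈ A, ∀ a' ∈ A, (∀ b ∈ A, f b ≤ f a) → f a ≤ f a' → a' = a) :
    SigmaDiffAt A f := by
  have hmaxC : ∀ y : X →L[ℝ] ℝ, (∀ a ∈ A, ∃ c ∈ C, y a ≤ y c) →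
      ∃ â ∈ C, sSup (y '' C) = y â ∧ ∀ b ∈ A, y b ≤ y â := by
    intro y hy
    obtain ⟨â, hâ, hyâ, hmax⟩ := hC.exists_sSup_image_eq_and_ge hCne y.continuous.continuousOn
    exact ⟨â, hâ, hyâ, fun b hb => (hy b hb).elim fun c ⟨hc, hbc⟩ => hbc.trans (hmax c hc)⟩
  obtain ⟨â, hâ, -, hfâ⟩ := hmaxC f hloc.self_of_nhds
  have hderiv := hC.hasFDerivAt_sSup_image hâ fun a ha hle => huniq â (hCA hâ) a (hCA ha) hfâ hle
  refine ⟨fun y => sSup (y '' C), ?_, hderiv.differentiableAt⟩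
  filter_upwards [hloc] with y hy
  obtain ⟨a, haC, hya, hmax⟩ := hmaxC y hy
  rw [hya, supportFn_eq_of_forall_le (hCA haC) hmax]

end Differentiability

theorem stmt10_general (hdim : Module.finrank ℝ X = 2)
    (K A : Set X)
    (hKconv : Convex ℝ K) (hKclosed : IsClosed K)
    (hKcone : ∀ t : ℝ, 0 ≤ t → ∀ x ∈ K, t • x ∈ K)
    (hKpointed : K ∩ (-K) = {0}) (hKint : (interior K).Nonempty)
    (hAne : A.Nonempty) (hAclosed : IsClosed A)
    (hAK : A + K = A) (hAsub : A ⊆ K \ {0})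
    (hsa : ∀ a ∈ A ∩ interior K, ∀ a' ∈ A ∩ interior K, a ≠ a' →
      ∀ t : ℝ, t ∈ Ioo (0 : ℝ) 1 → t • a + (1 - t) • a' ∈ interior A) :
    Convex ℝ A ∧
    (∀ x ∈ A, ∀ x' ∈ A, x ≠ x' → ∀ t : ℝ, t ∈ Ioo (0 : ℝ) 1 →
      t • x + (1 - t) • x' ∈ A + (recessionCone A \ {0})) ∧
    ∀ f ∈ interior (negDual K), SigmaDiffAt A f := by
  have : FiniteDimensional ℝ X := .of_finrank_eq_succ hdim
  have hAsubK : A ⊆ K := fun a ha => (hAsub ha).1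
  have hrec : recessionCone A = K := (recessionCone_subset hKclosed hKcone hAsubK).antisymm
    (subset_recessionCone hKcone hAK.subset hAne)
  have hconv : Convex ℝ A := convex_of_openSegment_subset_interior hKconv hKcone hKint
    hAclosed hAK.subset hAsubK hsa
  have hseg : ∀ x ∈ A, ∀ x' ∈ A, x ≠ x' → ∀ t : ℝ, t ∈ Ioo (0 : ℝ) 1 →
      t • x + (1 - t) • x' ∈ A + (recessionCone A \ {0}) := by
    rw [hrec]
    exact smul_add_one_sub_smul_mem_add_of_ne hdim hKconv hKcone hKpointed hconv hAsub hsa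
  refine ⟨hconv, hseg, fun f hf => ?_⟩
  obtain ⟨r, hr, hneg⟩ := exists_le_neg_mul_norm_of_mem_interior_negDual hf
  obtain ⟨C, hCA, hC, hCne, hloc⟩ := exists_isCompact_forall_exists_le hAclosed hAne hr
    fun y hy a ha => hneg y hy a (hAsubK ha)
  have hfneg : ∀ u ∈ recessionCone A \ {0}, f u < 0 := by
    rw [hrec]
    rintro u ⟨huK, hu0⟩
    have hu : 0 < ‖u‖ := norm_pos_iff.mpr hu0
    nlinarith [hneg f (Metric.mem_closedBall_self hr.le) u huK]
  exact sigmaDiffAt_of_isCompact hCA hC hCne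
    (eventually_of_mem (Metric.closedBall_mem_nhds f hr) hloc)
    fun a ha a' ha' hmax hle => eq_of_forall_le_of_forall_mem_add hseg hfneg ha ha' hmax hle

/-- Let `X` be two-dimensional and let `K, A` satisfy condition (H) with
`A + (K \ {0}) ⊆ int_K A`. If every open segment joining two distinct points of
`A ∩ int K` lies in `int A`, then `A` is convex, every open segment joining two distinct
points of `A` lies in `A + (A_∞ \ {0})`, and `σ_A` is differentiable at every point
of `int K⁻`. -/
theorem stmt10 (hdim : Module.finrank ℝ X = 2)
    (K A : Set X)
    (hKconv : Convex ℝ K) (hKclosed : IsClosed K)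
    (hKcone : ∀ t : ℝ, 0 ≤ t → ∀ x ∈ K, t • x ∈ K)
    (hKpointed : K ∩ (-K) = {0}) (hKint : (interior K).Nonempty)
    (hAne : A.Nonempty) (hAclosed : IsClosed A)
    (hAK : A + K = A) (hAsub : A ⊆ K \ {0})
    (hssc : A + (K \ {0}) ⊆ intWithin K A)
    (hsa : ∀ a ∈ A ∩ interior K, ∀ a' ∈ A ∩ interior K, a ≠ a' →
      ∀ t : ℝ, t ∈ Ioo (0 : ℝ) 1 → t • a + (1 - t) • a' ∈ interior A) :
    Convex ℝ A ∧
    (∀ x ∈ A, ∀ x' ∈ A, x ≠ x' → ∀ t : ℝ, t ∈ Ioo (0 : ℝ) 1 →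
      t • x + (1 - t) • x' ∈ A + (recessionCone A \ {0})) ∧
    ∀ f ∈ interior (negDual K), SigmaDiffAt A f :=
  stmt10_general hdim K A hKconv hKclosed hKcone hKpointed hKint hAne hAclosed hAK hAsub hsa
end

section
/- Let F : ℝ₊^p → ℝ₊ (p ≥ 2) be continuous with F(0) = 0 and F(x) ≥ F(x') whenever x − x' ∈ ℝ₊^p, and set L(γ) := {x ∈ ℝ₊^p : F(x) ≥ γ} and Γ_F := {γ > 0 : L(γ) ≠ ∅}. (a) If F is strictly quasiconcave on {x ∈ ℝ₊^p : F(x) > 0} (i.e. F(λx + (1−λ)x') > min{F(x), F(x')} for distinct x, x' in that set and λ ∈ (0,1)), then for every γ ∈ Γ_F the support function σ_{L(γ)} is (Fréchet) differentiable at every point of −ℝ₊₊^p. (b) If F satisfies F(x) > F(x') whenever x − x' ∈ ℝ₊^p \ {0} and F(x') > 0, and σ_{L(γ)} is differentiable at every point of −ℝ₊₊^p for every γ ∈ Γ_F, then F is quasiconcave. -/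
open Set Filter Topology RealInnerProductSpace

/-- The support function of a set `A ⊆ ℝ^p` (Euclidean space identified with its dual via
the inner product), with values in `ℝ ∪ {+∞}`. -/
noncomputable def supE {p : ℕ} (A : Set (EuclideanSpace ℝ (Fin p)))
    (y : EuclideanSpace ℝ (Fin p)) : EReal :=
  ⨆ a ∈ A, ((⟪a, y⟫ : ℝ) : EReal)

/-- The support function of `A` is (Fréchet) differentiable at `y`: some real-valued
function agreeing with it near `y` is differentiable at `y`. -/
def SigmaDiffAtE {p : ℕ} (A : Set (EuclideanSpace ℝ (Fin p)))
    (y : EuclideanSpace ℝ (Fin p)) : Prop :=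
  ∃ g : EuclideanSpace ℝ (Fin p) → ℝ,
    (∀ᶠ z in 𝓝 y, ((g z : ℝ) : EReal) = supE A z) ∧ DifferentiableAt ℝ g y

/-- The upper level set `L(γ) = {x ∈ ℝ₊^p : F x ≥ γ}`. -/
def levelSet {p : ℕ} (F : EuclideanSpace ℝ (Fin p) → ℝ) (γ : ℝ) :
    Set (EuclideanSpace ℝ (Fin p)) :=
  {x | (∀ i, 0 ≤ x i) ∧ γ ≤ F x}

/-!
(a) For `y < 0`, near `y` all maximisers of `⟪·, z⟫` on `L(γ)` lie in one compact part of
`L(γ)`. Strict quasiconcavity makes the maximiser at `y` unique: the midpoint of two maximisers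
satisfies `F > γ`, so it can be pushed down along a positive coordinate inside `L(γ)`, which
increases `⟪·, y⟫`. Hence a choice `a(z)` of maximisers is continuous at `y`, and
`z ↦ ⟪a(z), z⟫`, which is `σ_{L(γ)}` near `y`, has derivative `⟪a(y), ·⟫` at `y`.

(b) If `F m < γ < min (F x) (F x')` for a convex combination `m` of `x` and `x'`, choose `ε > 0`
with `F (m + ε𝟙) < γ`. Differentiability of `σ_{L(γ)}` makes `E q = min_{b ∈ L(γ)} ⟪b, q⟫`
differentiable at every `q > 0`, with gradient the minimiser `h q`. A minimiser on the open simplex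
of the barrier function `⟪m + ε𝟙, q⟫ - E q - (ε / p) ∑ log qᵢ` satisfies the Lagrange condition,
and together with Euler's identity `E q = ⟪h q, q⟫` this gives `h q < m + ε𝟙`, contradicting the
strict monotonicity of `F`.
-/

local notation "ℝ^" p:max => EuclideanSpace ℝ (Fin p)

section InnerProductSpace

variable {E : Type*} [NormedAddCommGroup E] [InnerProductSpace ℝ E] {A K : Set E} {az : E → E}
  {a y : E}

lemma ContinuousWithinAt.tendsto_add_smul {β : Type*} [TopologicalSpace β] {f : E → β}
    {s : Set E} {w v : E} (hf : ContinuousWithinAt f s w)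
    (hs : ∀ᶠ t in 𝓝[>] (0 : ℝ), w + t • v ∈ s) :
    Tendsto (fun t : ℝ => f (w + t • v)) (𝓝[>] 0) (𝓝 (f w)) := by
  refine hf.tendsto.comp (tendsto_nhdsWithin_iff.2 ⟨?_, hs⟩)
  exact ((continuous_const.add (continuous_id.smul continuous_const)).tendsto' 0 w
    (by simp)).mono_left nhdsWithin_le_nhds

lemma tendsto_of_unique_isMaxOn (hK : IsCompact K) (hKA : K ⊆ A)
    (hmax : ∀ᶠ z in 𝓝 y, az z ∈ K ∧ IsMaxOn (⟪·, z⟫) A (az z))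
    (huniq : ∀ b ∈ A, IsMaxOn (⟪·, y⟫) A b → b = a) :
    Tendsto az (𝓝 y) (𝓝 a) := by
  refine hK.tendsto_nhds_of_unique_mapClusterPt (hmax.mono fun _ h => h.1) fun b hbK hb => ?_
  refine huniq b (hKA hbK) fun c hc => ?_
  by_contra hlt
  replace hlt : ⟪b, y⟫ < ⟪c, y⟫ := not_le.1 hlt
  have hnear : ∀ᶠ wz : E × E in 𝓝 b ×ˢ 𝓝 y, ⟪wz.1, wz.2⟫ < ⟪c, wz.2⟫ := by
    rw [← nhds_prod_eq]
    exact (continuous_fst.inner continuous_snd).continuousAt.eventually_lt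
      (continuous_const.inner continuous_snd).continuousAt hlt
  obtain ⟨P, hP, Q, hQ, hPQ⟩ := eventually_prod_iff.1 hnear
  obtain ⟨z, hPz, hQz, -, hmaxz⟩ :=
    ((mapClusterPt_iff_frequently.1 hb _ hP).and_eventually (hQ.and hmax)).exists
  exact (hPQ hPz hQz).not_ge (hmaxz hc)

lemma hasFDerivAt_inner_of_isMaxOn (hmax : ∀ᶠ z in 𝓝 y, az z ∈ A ∧ IsMaxOn (⟪·, z⟫) A (az z))
    (hcont : Tendsto az (𝓝 y) (𝓝 (az y))) :
    HasFDerivAt (fun z => ⟪az z, z⟫) (innerSL ℝ (az y)) y := by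
  obtain ⟨hay, hmaxy⟩ := hmax.self_of_nhds
  refine HasFDerivAt.of_isLittleO (Asymptotics.isLittleO_iff.2 fun ε hε => ?_)
  filter_upwards [hmax, hcont (Metric.closedBall_mem_nhds _ hε)] with z ⟨hz, hmaxz⟩ hdist
  have hlow : ⟪az y, z⟫ ≤ ⟪az z, z⟫ := hmaxz hay
  have hup : ⟪az z, y⟫ ≤ ⟪az y, y⟫ := hmaxy hz
  have hcs : ⟪az z - az y, z - y⟫ ≤ ‖az z - az y‖ * ‖z - y‖ := real_inner_le_norm _ _
  have hε' : ‖az z - az y‖ * ‖z - y‖ ≤ ε * ‖z - y‖ :=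
    mul_le_mul_of_nonneg_right (by rwa [← dist_eq_norm]) (norm_nonneg _)
  simp only [innerSL_apply_apply, inner_sub_left, inner_sub_right] at hcs ⊢
  rw [Real.norm_eq_abs, abs_le]
  constructor <;> linarith

end InnerProductSpace

section SupportFunction

variable {p : ℕ} {A : Set (ℝ^p)} {a y : ℝ^p}

lemma supE_eq_of_isMaxOn (ha : a ∈ A) (hmax : IsMaxOn (⟪·, y⟫) A a) : supE A y = ⟪a, y⟫ :=
  le_antisymm (iSup₂_le fun _ hb => EReal.coe_le_coe_iff.2 (hmax hb))
    (le_iSup₂ (f := fun b (_ : b ∈ A) => ((⟪b, y⟫ : ℝ) : EReal)) a ha)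

/-- `⟪a, ·⟫` is a minorant of `σ_A` touching it at `y`, so `G - ⟪a, ·⟫` has a local minimum
there. -/
lemma hasFDerivAt_of_eventuallyEq_supE {G : ℝ^p → ℝ}
    (hGe : ∀ᶠ z in 𝓝 y, (G z : EReal) = supE A z) (hGd : DifferentiableAt ℝ G y)
    (ha : a ∈ A) (hmax : IsMaxOn (⟪·, y⟫) A a) : HasFDerivAt G (innerSL ℝ a) y := by
  have hGy : G y = ⟪a, y⟫ := by
    exact_mod_cast hGe.self_of_nhds.trans (supE_eq_of_isMaxOn ha hmax)
  have hmin : IsLocalMin (fun z => G z - innerSL ℝ a z) y := by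
    filter_upwards [hGe] with z hz
    have hle : ((⟪a, z⟫ : ℝ) : EReal) ≤ G z :=
      hz ▸ le_iSup₂ (f := fun b (_ : b ∈ A) => ((⟪b, z⟫ : ℝ) : EReal)) a ha
    simp only [innerSL_apply_apply, hGy, sub_self]
    exact sub_nonneg.2 (EReal.coe_le_coe_iff.1 hle)
  have h0 := hmin.hasFDerivAt_eq_zero (hGd.hasFDerivAt.sub (innerSL ℝ a).hasFDerivAt)
  exact sub_eq_zero.1 h0 ▸ hGd.hasFDerivAt

end SupportFunction

section Orthant

variable {p : ℕ}

lemma real_inner_eq_sum_mul (x y : ℝ^p) : ⟪x, y⟫ = ∑ i, x i * y i := by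
  simp [PiLp.inner_apply, mul_comm]

lemma eventually_forall_apply_lt {y : ℝ^p} {c : Fin p → ℝ} (h : ∀ i, y i < c i) :
    ∀ᶠ z in 𝓝 y, ∀ i, z i < c i :=
  eventually_all.2 fun i =>
    (PiLp.continuous_apply 2 _ i).continuousAt.eventually_lt continuousAt_const (h i)

lemma eventually_forall_lt_apply {y : ℝ^p} {c : Fin p → ℝ} (h : ∀ i, c i < y i) :
    ∀ᶠ z in 𝓝 y, ∀ i, c i < z i :=
  eventually_all.2 fun i =>
    continuousAt_const.eventually_lt (PiLp.continuous_apply 2 _ i).continuousAt (h i)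

lemma isClosed_orthant : IsClosed {x : ℝ^p | ∀ i, 0 ≤ x i} := by
  simp only [Set.ofPred_forall]
  exact isClosed_iInter fun i => isClosed_le continuous_const (PiLp.continuous_apply 2 _ i)

lemma isClosed_levelSet {F : ℝ^p → ℝ} (hF : ContinuousOn F {x | ∀ i, 0 ≤ x i}) (γ : ℝ) :
    IsClosed (levelSet F γ) :=
  hF.preimage_isClosed_of_isClosed isClosed_orthant isClosed_Ici

lemma isCompact_setOf_forall_mem_Icc (l u : Fin p → ℝ) :
    IsCompact {x : ℝ^p | ∀ i, x i ∈ Icc (l i) (u i)} := by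
  have := (EuclideanSpace.equiv (Fin p) ℝ).toHomeomorph.isCompact_preimage.2
    (isCompact_univ_pi fun i => isCompact_Icc (a := l i) (b := u i))
  simpa [Set.pi] using this

lemma mul_neg_le_neg_inner {b z : ℝ^p} (hb : ∀ i, 0 ≤ b i) (hz : ∀ i, z i ≤ 0) (i : Fin p) :
    b i * -z i ≤ -⟪b, z⟫ := by
  rw [real_inner_eq_sum_mul, ← Finset.sum_neg_distrib]
  simp_rw [← mul_neg]
  exact Finset.single_le_sum (f := fun k => b k * -z k)
    (fun k _ => mul_nonneg (hb k) (neg_nonneg.2 (hz k))) (Finset.mem_univ i)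

variable {A : Set (ℝ^p)} {y : ℝ^p}

lemma exists_isCompact_eventually_mem (hA : IsClosed A) (hA0 : ∀ a ∈ A, ∀ i, 0 ≤ a i)
    (x₀ : ℝ^p) (hy : ∀ i, y i < 0) :
    ∃ K ⊆ A, IsCompact K ∧ ∀ᶠ z in 𝓝 y, ∀ b ∈ A, ⟪x₀, z⟫ ≤ ⟪b, z⟫ → b ∈ K := by
  set M := -⟪x₀, y⟫ + 1
  refine ⟨A ∩ {b | ∀ i, b i ∈ Icc 0 (2 * M / -y i)}, inter_subset_left,
    (isCompact_setOf_forall_mem_Icc _ _).inter_left hA, ?_⟩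
  have hM : ∀ᶠ z in 𝓝 y, -⟪x₀, z⟫ < M :=
    (continuous_const.inner continuous_id).neg.continuousAt.eventually_lt continuousAt_const
      (by simp [M])
  filter_upwards [eventually_forall_apply_lt (c := fun i => y i / 2) fun i => by linarith [hy i],
    hM] with z hz hMz b hb hxb
  refine ⟨hb, fun i => ⟨hA0 b hb i, ?_⟩⟩
  rw [le_div_iff₀ (by linarith [hy i])]
  have hbz := mul_neg_le_neg_inner (hA0 b hb) (fun k => (hz k).le.trans (by linarith [hy k])) i
  nlinarith [mul_nonneg (hA0 b hb i) (sub_nonneg.2 (hz i).le)]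

lemma exists_isMaxOn_inner (hA : IsClosed A) (hA0 : ∀ a ∈ A, ∀ i, 0 ≤ a i) (hne : A.Nonempty)
    (hy : ∀ i, y i < 0) : ∃ a ∈ A, IsMaxOn (⟪·, y⟫) A a := by
  obtain ⟨x₀, hx₀⟩ := hne
  obtain ⟨K, hKA, hK, hmem⟩ := exists_isCompact_eventually_mem hA hA0 x₀ hy
  have hyK := hmem.self_of_nhds
  obtain ⟨a, haK, hmax⟩ :=
    hK.exists_isMaxOn ⟨x₀, hyK x₀ hx₀ le_rfl⟩
      (continuous_id.inner continuous_const : Continuous (⟪·, y⟫)).continuousOn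
  refine ⟨a, hKA haK, fun b hb => ?_⟩
  by_cases h : ⟪x₀, y⟫ ≤ ⟪b, y⟫
  · exact hmax (hyK b hb h)
  · exact (not_le.1 h).le.trans (hmax (hyK x₀ hx₀ le_rfl))

lemma exists_selection_isMaxOn_inner (hA : IsClosed A) (hA0 : ∀ a ∈ A, ∀ i, 0 ≤ a i)
    (hne : A.Nonempty) :
    ∃ az : ℝ^p → ℝ^p, (∀ z, az z ∈ A) ∧ ∀ z, (∀ i, z i < 0) → IsMaxOn (⟪·, z⟫) A (az z) := by
  have hex : ∀ z : ℝ^p, ∃ a ∈ A, (∀ i, z i < 0) → IsMaxOn (⟪·, z⟫) A a := fun z => by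
    by_cases hz : ∀ i, z i < 0
    · obtain ⟨a, ha, hmax⟩ := exists_isMaxOn_inner hA hA0 hne hz
      exact ⟨a, ha, fun _ => hmax⟩
    · exact ⟨hne.some, hne.some_mem, fun h => absurd h hz⟩
  choose az haz hmaxz using hex
  exact ⟨az, haz, hmaxz⟩

lemma sigmaDiffAtE_of_unique_isMaxOn (hA : IsClosed A) (hA0 : ∀ a ∈ A, ∀ i, 0 ≤ a i)
    (hne : A.Nonempty) (hy : ∀ i, y i < 0)
    (huniq : ∀ a ∈ A, ∀ b ∈ A, IsMaxOn (⟪·, y⟫) A a → IsMaxOn (⟪·, y⟫) A b → a = b) :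
    SigmaDiffAtE A y := by
  obtain ⟨az, haz, hmaxz⟩ := exists_selection_isMaxOn_inner hA hA0 hne
  have hmax : ∀ᶠ z in 𝓝 y, IsMaxOn (⟪·, z⟫) A (az z) :=
    (eventually_forall_apply_lt (c := 0) hy).mono hmaxz
  obtain ⟨K, hKA, hK, hKmem⟩ := exists_isCompact_eventually_mem hA hA0 (az y) hy
  have hcont : Tendsto az (𝓝 y) (𝓝 (az y)) := by
    refine tendsto_of_unique_isMaxOn hK hKA ?_ fun b hb hbmax =>
      huniq b hb (az y) (haz y) hbmax hmax.self_of_nhds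
    filter_upwards [hmax, hKmem] with z hz hzK
    exact ⟨hzK _ (haz z) (hz (haz y)), hz⟩
  refine ⟨fun z => ⟪az z, z⟫, ?_,
    (hasFDerivAt_inner_of_isMaxOn (hmax.mono fun z hz => ⟨haz z, hz⟩) hcont).differentiableAt⟩
  filter_upwards [hmax] with z hz
  exact (supE_eq_of_isMaxOn (haz z) hz).symm

end Orthant

section LevelSet

variable {p : ℕ} {F : ℝ^p → ℝ} {γ : ℝ}

lemma exists_inner_gt_of_lt_apply (hF : ContinuousOn F {x | ∀ i, 0 ≤ x i}) {w y : ℝ^p}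
    (hw : ∀ i, 0 ≤ w i) (hw0 : w ≠ 0) (hFw : γ < F w) (hy : ∀ i, y i < 0) :
    ∃ b ∈ levelSet F γ, ⟪w, y⟫ < ⟪b, y⟫ := by
  obtain ⟨i, hi⟩ : ∃ i, 0 < w i := by
    by_contra! h
    exact hw0 (PiLp.ext fun i => le_antisymm (h i) (hw i))
  set v : ℝ^p := -EuclideanSpace.single i 1
  have hray : ∀ s ∈ Ioc 0 (w i), ∀ k, 0 ≤ (w + s • v) k := by
    intro s hs k
    by_cases hk : k = i
    · subst hk
      simp only [v, smul_neg, PiLp.add_apply, PiLp.neg_apply, PiLp.smul_apply,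
        PiLp.single_eq_same, smul_eq_mul, mul_one]
      linarith [hs.2]
    · simp [v, hk, hw k]
  have hlim := (hF w hw).tendsto_add_smul (v := v)
    (mem_of_superset (Ioc_mem_nhdsGT hi) hray)
  obtain ⟨s, hsF, hs⟩ := ((hlim.eventually (lt_mem_nhds hFw)).and (Ioc_mem_nhdsGT hi)).exists
  refine ⟨w + s • v, ⟨hray s hs, hsF.le⟩, ?_⟩
  simp only [v, inner_add_left, real_inner_smul_left, inner_neg_left,
    EuclideanSpace.inner_single_left, map_one, one_mul]
  nlinarith [hy i, hs.1]

lemma sigmaDiffAtE_levelSet_of_strictQuasiconcave (hF : ContinuousOn F {x | ∀ i, 0 ≤ x i})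
    (hF0 : F 0 = 0)
    (hsqc : ∀ x x' : ℝ^p, (∀ i, 0 ≤ x i) → 0 < F x → (∀ i, 0 ≤ x' i) → 0 < F x' → x ≠ x' →
      ∀ t ∈ Ioo (0 : ℝ) 1, min (F x) (F x') < F (t • x + (1 - t) • x'))
    (hγ : 0 < γ) (hne : (levelSet F γ).Nonempty) {y : ℝ^p} (hy : ∀ i, y i < 0) :
    SigmaDiffAtE (levelSet F γ) y := by
  refine sigmaDiffAtE_of_unique_isMaxOn (isClosed_levelSet hF γ) (fun a ha => ha.1) hne hy
    fun a ha b hb hmaxa hmaxb => ?_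
  by_contra hab
  set w : ℝ^p := (1 / 2 : ℝ) • a + (1 - 1 / 2 : ℝ) • b
  have hFw : γ < F w := (le_min ha.2 hb.2).trans_lt <|
    hsqc a b ha.1 (hγ.trans_le ha.2) hb.1 (hγ.trans_le hb.2) hab _ ⟨by norm_num, by norm_num⟩
  have hw : ∀ i, 0 ≤ w i := fun i => by
    simp only [w, PiLp.add_apply, PiLp.smul_apply, smul_eq_mul]
    linarith [ha.1 i, hb.1 i]
  have hw0 : w ≠ 0 := by
    rintro h
    rw [h, hF0] at hFw
    linarith
  obtain ⟨c, hc, hlt⟩ := exists_inner_gt_of_lt_apply hF hw hw0 hFw hy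
  have hab' : ⟪a, y⟫ ≤ ⟪b, y⟫ := hmaxb ha
  have hba' : ⟪b, y⟫ ≤ ⟪a, y⟫ := hmaxa hb
  have hcy : ⟪c, y⟫ ≤ ⟪a, y⟫ := hmaxa hc
  simp only [w, inner_add_left, real_inner_smul_left] at hlt
  linarith

end LevelSet

section Simplex

variable {p : ℕ}

def posSimplex (p : ℕ) : Set (ℝ^p) := {q | (∀ i, 0 < q i) ∧ ∑ i, q i = 1}

lemma apply_le_one_of_mem_posSimplex {q : ℝ^p} (hq : q ∈ posSimplex p) (i : Fin p) : q i ≤ 1 :=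
  hq.2 ▸ Finset.single_le_sum (fun k _ => (hq.1 k).le) (Finset.mem_univ i)

lemma sum_log_le_log_of_mem_posSimplex {q : ℝ^p} (hq : q ∈ posSimplex p) (i : Fin p) :
    ∑ j, Real.log (q j) ≤ Real.log (q i) := by
  rw [← Finset.add_sum_erase _ _ (Finset.mem_univ i)]
  linarith [Finset.sum_nonpos fun j (_ : j ∈ Finset.univ.erase i) =>
    Real.log_nonpos (hq.1 j).le (apply_le_one_of_mem_posSimplex hq j)]

lemma hasFDerivAt_sum_log {q : ℝ^p} (hq : ∀ i, 0 < q i) :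
    HasFDerivAt (fun x : ℝ^p => ∑ i, Real.log (x i))
      (innerSL ℝ (WithLp.toLp 2 fun i => (q i)⁻¹)) q := by
  have h := HasFDerivAt.fun_sum (u := Finset.univ) fun i _ =>
    (Real.hasDerivAt_log (hq i).ne').comp_hasFDerivAt q (EuclideanSpace.proj (𝕜 := ℝ) i).hasFDerivAt
  exact h.congr_fderiv (ContinuousLinearMap.ext fun v => by simp [real_inner_eq_sum_mul])

/-- The barrier `-∑ log qᵢ` blows up at the boundary, so the minimum is attained. -/
lemma exists_isMinOn_sub_log {f : ℝ^p → ℝ} {β : ℝ} (hp : 0 < p) (hβ : 0 < β)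
    (hf : ContinuousOn f (posSimplex p)) (hf0 : ∀ q ∈ posSimplex p, 0 ≤ f q) :
    ∃ q₀ ∈ posSimplex p, IsMinOn (fun q => f q - β * ∑ i, Real.log (q i)) (posSimplex p) q₀ := by
  set φ := fun q : ℝ^p => f q - β * ∑ i, Real.log (q i)
  set qc : ℝ^p := WithLp.toLp 2 fun _ => (p : ℝ)⁻¹
  have hqc : qc ∈ posSimplex p := ⟨fun _ => by positivity, by
    simp only [qc, Finset.sum_const, Finset.card_univ, Fintype.card_fin, nsmul_eq_mul]
    exact mul_inv_cancel₀ (by positivity)⟩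
  set c := min (p : ℝ)⁻¹ (Real.exp (-φ qc / β))
  have hc : 0 < c := lt_min (by positivity) (Real.exp_pos _)
  set Δ := {q : ℝ^p | ∀ i, q i ∈ Icc c 1} ∩ {q | ∑ i, q i = 1}
  have hΔ : Δ ⊆ posSimplex p := fun q hq => ⟨fun i => hc.trans_le (hq.1 i).1, hq.2⟩
  have hΔc : IsCompact Δ := (isCompact_setOf_forall_mem_Icc _ _).inter_right
    (isClosed_eq (continuous_finsetSum _ fun i _ => PiLp.continuous_apply 2 _ i) continuous_const)
  have hφ : ContinuousOn φ Δ := (hf.mono hΔ).sub <| continuousOn_const.mul <|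
    continuousOn_finsetSum _ fun i _ =>
      (PiLp.continuous_apply 2 _ i).continuousOn.log fun q hq => ((hΔ hq).1 i).ne'
  have hmemΔ : ∀ q ∈ posSimplex p, (∀ i, c ≤ q i) → q ∈ Δ := fun q hq hcq =>
    ⟨fun i => ⟨hcq i, apply_le_one_of_mem_posSimplex hq i⟩, hq.2⟩
  obtain ⟨q₀, hq₀, hmin⟩ := hΔc.exists_isMinOn
    ⟨qc, hmemΔ qc hqc fun _ => min_le_left _ _⟩ hφ
  refine ⟨q₀, hΔ hq₀, fun q hq => ?_⟩
  by_cases hcq : ∀ i, c ≤ q i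
  · exact hmin (hmemΔ q hq hcq)
  obtain ⟨i, hi⟩ := not_forall.1 hcq
  replace hi := not_le.1 hi
  have hlog : Real.log (q i) * β < -φ qc := by
    rw [← lt_div_iff₀ hβ]
    calc Real.log (q i) < Real.log c := Real.log_lt_log (hq.1 i) hi
      _ ≤ Real.log (Real.exp (-φ qc / β)) := Real.log_le_log hc (min_le_right _ _)
      _ = -φ qc / β := Real.log_exp _
  have hsum := mul_le_mul_of_nonneg_left (sum_log_le_log_of_mem_posSimplex hq i) hβ.le
  have hqc₀ : φ q₀ ≤ φ qc := hmin (hmemΔ qc hqc fun _ => min_le_left _ _)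
  show φ q₀ ≤ φ q
  linarith [hf0 q hq]

lemma IsMinOn.apply_eq_apply_of_hasFDerivAt {φ : ℝ^p → ℝ} {q₀ v : ℝ^p}
    (hmin : IsMinOn φ (posSimplex p) q₀) (hq₀ : q₀ ∈ posSimplex p)
    (hφ : HasFDerivAt φ (innerSL ℝ v) q₀) (i j : Fin p) : v i = v j := by
  set d : ℝ^p := EuclideanSpace.single i 1 - EuclideanSpace.single j 1
  have hd : ∑ k, d k = 0 := by simp [d, Finset.sum_sub_distrib]
  have hpath : HasDerivAt (fun s : ℝ => q₀ + s • d) d 0 := by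
    simpa using ((hasDerivAt_id (0 : ℝ)).smul_const d).const_add q₀
  have htend : Tendsto (fun s : ℝ => q₀ + s • d) (𝓝 0) (𝓝 q₀) := by
    simpa using hpath.continuousAt.tendsto
  have hloc : IsLocalMin (fun s : ℝ => φ (q₀ + s • d)) 0 := by
    filter_upwards [htend.eventually (eventually_forall_lt_apply (c := 0) hq₀.1)] with s hs
    have hsum : ∑ k, (q₀ + s • d) k = 1 := by
      simp [Finset.sum_add_distrib, ← Finset.mul_sum, hd, hq₀.2]
    simpa using hmin (show q₀ + s • d ∈ posSimplex p from ⟨hs, hsum⟩)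
  have h0 := hloc.hasDerivAt_eq_zero (hφ.comp_hasDerivAt_of_eq 0 hpath (by simp))
  simpa [d, inner_sub_right, EuclideanSpace.inner_single_right, sub_eq_zero] using h0

/-- At a minimiser of `f - (ε / p) ∑ log qᵢ` on the simplex, the Lagrange condition makes
`∇f q - (ε / p) q⁻¹` constant, and Euler's identity shows that the constant is `f q - ε ≥ 0`. -/
lemma exists_mem_posSimplex_forall_pos {f : ℝ^p → ℝ} {w : ℝ^p → ℝ^p} {ε : ℝ} (hp : 0 < p)
    (hε : 0 < ε) (hf : ∀ q ∈ posSimplex p, HasFDerivAt f (innerSL ℝ (w q)) q)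
    (hfw : ∀ q ∈ posSimplex p, f q = ⟪w q, q⟫) (hfε : ∀ q ∈ posSimplex p, ε ≤ f q) :
    ∃ q ∈ posSimplex p, ∀ i, 0 < w q i := by
  set β := ε / p
  have hβ : 0 < β := by positivity
  obtain ⟨q, hq, hmin⟩ := exists_isMinOn_sub_log hp hβ
    (fun q hq => (hf q hq).continuousAt.continuousWithinAt)
    (fun q hq => hε.le.trans (hfε q hq))
  set v : ℝ^p := WithLp.toLp 2 fun i => (q i)⁻¹
  have hφ : HasFDerivAt (fun x => f x - β * ∑ i, Real.log (x i)) (innerSL ℝ (w q - β • v)) q := by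
    refine ((hf q hq).sub ((hasFDerivAt_sum_log hq.1).const_mul β)).congr_fderiv ?_
    simp [v, map_sub]
  set κ := w q ⟨0, hp⟩ - β * (q ⟨0, hp⟩)⁻¹
  have hκ : ∀ i, w q i - β * (q i)⁻¹ = κ := fun i => by
    simpa [v] using hmin.apply_eq_apply_of_hasFDerivAt hq hφ i ⟨0, hp⟩
  have hκ0 : 0 ≤ κ := by
    have hvq : ⟪v, q⟫ = p := by
      simp [real_inner_eq_sum_mul, v, fun i => inv_mul_cancel₀ (hq.1 i).ne']
    have hEuler : ⟪w q - β • v, q⟫ = f q - ε := by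
      rw [inner_sub_left, real_inner_smul_left, hvq, ← hfw q hq,
        div_mul_cancel₀ _ (by positivity)]
    have hκq : ⟪w q - β • v, q⟫ = κ := by
      simp only [real_inner_eq_sum_mul, PiLp.sub_apply, PiLp.smul_apply, smul_eq_mul, v]
      simp_rw [hκ, ← Finset.mul_sum, hq.2, mul_one]
    linarith [hfε q hq]
  refine ⟨q, hq, fun i => ?_⟩
  have := mul_pos hβ (inv_pos.2 (hq.1 i))
  linarith [hκ i]

end Simplex

section LowerSupportFunction

variable {p : ℕ} {A : Set (ℝ^p)}

/-- `q ↦ ⟪h q, q⟫ = min_{b ∈ A} ⟪b, q⟫` is `-σ_A (-q)`, so it inherits differentiability. -/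
lemma hasFDerivAt_inner_of_isMaxOn_neg {h : ℝ^p → ℝ^p} {q : ℝ^p} (hq : ∀ i, 0 < q i)
    (hdiff : SigmaDiffAtE A (-q))
    (hh : ∀ q', (∀ i, 0 < q' i) → h q' ∈ A ∧ IsMaxOn (⟪·, -q'⟫) A (h q')) :
    HasFDerivAt (fun q' => ⟪h q', q'⟫) (innerSL ℝ (h q)) q := by
  obtain ⟨G, hGe, hGd⟩ := hdiff
  have hG := hasFDerivAt_of_eventuallyEq_supE hGe hGd (hh q hq).1 (hh q hq).2
  have hcomp : HasFDerivAt (fun q' => -G (-q')) (innerSL ℝ (h q)) q :=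
    (hG.comp q (hasFDerivAt_id q).neg).neg.congr_fderiv (ContinuousLinearMap.ext fun v => by simp)
  refine hcomp.congr_of_eventuallyEq ?_
  filter_upwards [(continuous_neg.tendsto q).eventually hGe,
    eventually_forall_lt_apply (c := 0) hq] with q' hGq' hq'
  rw [supE_eq_of_isMaxOn (hh q' hq').1 (hh q' hq').2, EReal.coe_eq_coe_iff] at hGq'
  simp [hGq', inner_neg_right]

lemma exists_forall_lt_add_of_forall_exists_inner_le (hp : 0 < p) (hA : IsClosed A)
    (hA0 : ∀ a ∈ A, ∀ i, 0 ≤ a i) (hdiff : ∀ y : ℝ^p, (∀ i, y i < 0) → SigmaDiffAtE A y)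
    {m : ℝ^p} (hm : ∀ q : ℝ^p, (∀ i, 0 < q i) → ∃ b ∈ A, ⟪b, q⟫ ≤ ⟪m, q⟫) {ε : ℝ}
    (hε : 0 < ε) : ∃ b ∈ A, ∀ i, b i < m i + ε := by
  obtain ⟨x₀, hx₀, -⟩ := hm (WithLp.toLp 2 fun _ => 1) fun _ => one_pos
  obtain ⟨az, haz, hmaxz⟩ := exists_selection_isMaxOn_inner hA hA0 ⟨x₀, hx₀⟩
  set h := fun q => az (-q)
  have hhmax : ∀ q, (∀ i, 0 < q i) → IsMaxOn (⟪·, -q⟫) A (h q) :=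
    fun q hq => hmaxz _ fun i => by simpa using hq i
  set u : ℝ^p := WithLp.toLp 2 fun i => m i + ε
  have hderiv : ∀ q ∈ posSimplex p,
      HasFDerivAt (fun q => ⟪u, q⟫ - ⟪h q, q⟫) (innerSL ℝ (u - h q)) q := fun q hq => by
    rw [map_sub]
    exact (innerSL ℝ u).hasFDerivAt.sub (hasFDerivAt_inner_of_isMaxOn_neg hq.1
      (hdiff _ fun i => by simpa using hq.1 i) fun q' hq' => ⟨haz _, hhmax q' hq'⟩)
  have hgap : ∀ q ∈ posSimplex p, ε ≤ ⟪u, q⟫ - ⟪h q, q⟫ := fun q hq => by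
    obtain ⟨b, hb, hbm⟩ := hm q hq.1
    have hhb : ⟪b, -q⟫ ≤ ⟪h q, -q⟫ := hhmax q hq.1 hb
    have huq : ⟪u, q⟫ = ⟪m, q⟫ + ε := by
      simp [u, real_inner_eq_sum_mul, add_mul, Finset.sum_add_distrib, ← Finset.mul_sum, hq.2]
    rw [inner_neg_right, inner_neg_right] at hhb
    linarith
  obtain ⟨q, -, hpos⟩ := exists_mem_posSimplex_forall_pos hp hε hderiv
    (fun q _ => (inner_sub_left _ _ _).symm) hgap
  exact ⟨h q, haz _, fun i => by simpa [u] using hpos i⟩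

end LowerSupportFunction

section Quasiconcavity

variable {p : ℕ} {F : ℝ^p → ℝ}

lemma exists_pos_apply_add_smul_one_lt (hF : ContinuousOn F {x | ∀ i, 0 ≤ x i}) {m : ℝ^p}
    (hm : ∀ i, 0 ≤ m i) {γ : ℝ} (hγ : F m < γ) :
    ∃ ε : ℝ, 0 < ε ∧ F (m + ε • WithLp.toLp 2 fun _ => 1) < γ := by
  have hray : ∀ᶠ s in 𝓝[>] (0 : ℝ),
      m + s • (WithLp.toLp 2 fun _ => 1 : ℝ^p) ∈ {x | ∀ i, 0 ≤ x i} := by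
    filter_upwards [self_mem_nhdsWithin] with s (hs : 0 < s) i
    simp only [PiLp.add_apply, PiLp.smul_apply, smul_eq_mul, mul_one]
    linarith [hm i]
  obtain ⟨ε, hεF, hε⟩ := ((((hF m hm).tendsto_add_smul hray).eventually
    (gt_mem_nhds hγ)).and self_mem_nhdsWithin).exists
  exact ⟨ε, hε, hεF⟩

lemma quasiconcave_of_sigmaDiffAtE_levelSet (hp : 0 < p)
    (hFnonneg : ∀ x : ℝ^p, (∀ i, 0 ≤ x i) → 0 ≤ F x) (hF : ContinuousOn F {x | ∀ i, 0 ≤ x i})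
    (hsm : ∀ x x' : ℝ^p, (∀ i, 0 ≤ x' i) → (∀ i, x' i ≤ x i) → x ≠ x' → 0 < F x' → F x' < F x)
    (hdiff : ∀ γ : ℝ, 0 < γ → (levelSet F γ).Nonempty →
      ∀ y : ℝ^p, (∀ i, y i < 0) → SigmaDiffAtE (levelSet F γ) y)
    {x x' : ℝ^p} (hx : ∀ i, 0 ≤ x i) (hx' : ∀ i, 0 ≤ x' i) {t : ℝ} (ht : t ∈ Icc (0 : ℝ) 1) :
    min (F x) (F x') ≤ F (t • x + (1 - t) • x') := by
  by_contra! hlt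
  set m := t • x + (1 - t) • x'
  have hm : ∀ i, 0 ≤ m i := fun i => by
    simp only [m, PiLp.add_apply, PiLp.smul_apply, smul_eq_mul]
    nlinarith [hx i, hx' i, ht.1, ht.2]
  obtain ⟨γ, hγm, hγx⟩ := exists_between hlt
  have hγ : 0 < γ := (hFnonneg m hm).trans_lt hγm
  have hxL : x ∈ levelSet F γ := ⟨hx, hγx.le.trans (min_le_left _ _)⟩
  have hx'L : x' ∈ levelSet F γ := ⟨hx', hγx.le.trans (min_le_right _ _)⟩
  have hcost : ∀ q, ∃ b ∈ levelSet F γ, ⟪b, q⟫ ≤ ⟪m, q⟫ := fun q => by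
    have hmq : ⟪m, q⟫ = t * ⟪x, q⟫ + (1 - t) * ⟪x', q⟫ := by
      simp only [m, inner_add_left, real_inner_smul_left]
    rcases le_total ⟪x, q⟫ ⟪x', q⟫ with h | h
    · exact ⟨x, hxL, by nlinarith [ht.1, ht.2]⟩
    · exact ⟨x', hx'L, by nlinarith [ht.1, ht.2]⟩
  obtain ⟨ε, hε, hεF⟩ := exists_pos_apply_add_smul_one_lt hF hm hγm
  obtain ⟨b, hbL, hb⟩ := exists_forall_lt_add_of_forall_exists_inner_le hp
    (isClosed_levelSet hF γ) (fun a ha => ha.1) (hdiff γ hγ ⟨x, hxL⟩) (fun q _ => hcost q) hε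
  have hbm : ∀ i, b i ≤ (m + ε • (WithLp.toLp 2 fun _ => 1 : ℝ^p)) i := fun i => by
    simpa using (hb i).le
  have hFb := hsm _ b hbL.1 hbm (by rintro rfl; linarith [hbL.2]) (hγ.trans_le hbL.2)
  linarith [hbL.2]

end Quasiconcavity

theorem stmt19_general (p : ℕ) (hp : 2 ≤ p)
    (F : EuclideanSpace ℝ (Fin p) → ℝ)
    (hFnonneg : ∀ x : EuclideanSpace ℝ (Fin p), (∀ i, 0 ≤ x i) → 0 ≤ F x)
    (hFcont : ContinuousOn F {x : EuclideanSpace ℝ (Fin p) | ∀ i, 0 ≤ x i})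
    (hF0 : F 0 = 0) :
    ((∀ x x' : EuclideanSpace ℝ (Fin p),
        (∀ i, 0 ≤ x i) → 0 < F x → (∀ i, 0 ≤ x' i) → 0 < F x' → x ≠ x' →
        ∀ t : ℝ, t ∈ Ioo (0 : ℝ) 1 →
          min (F x) (F x') < F (t • x + (1 - t) • x')) →
      ∀ γ : ℝ, 0 < γ → (levelSet F γ).Nonempty →
        ∀ y : EuclideanSpace ℝ (Fin p), (∀ i, y i < 0) → SigmaDiffAtE (levelSet F γ) y) ∧
    ((∀ x x' : EuclideanSpace ℝ (Fin p),
        (∀ i, 0 ≤ x' i) → (∀ i, x' i ≤ x i) → x ≠ x' → 0 < F x' → F x' < F x) →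
      (∀ γ : ℝ, 0 < γ → (levelSet F γ).Nonempty →
        ∀ y : EuclideanSpace ℝ (Fin p), (∀ i, y i < 0) → SigmaDiffAtE (levelSet F γ) y) →
      ∀ x x' : EuclideanSpace ℝ (Fin p), (∀ i, 0 ≤ x i) → (∀ i, 0 ≤ x' i) →
        ∀ t : ℝ, t ∈ Icc (0 : ℝ) 1 →
          min (F x) (F x') ≤ F (t • x + (1 - t) • x')) := by
  exact ⟨fun hsqc γ hγ hne y hy =>
    sigmaDiffAtE_levelSet_of_strictQuasiconcave hFcont hF0 hsqc hγ hne hy,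
    fun hsm hdiff x x' hx hx' t ht =>
    quasiconcave_of_sigmaDiffAtE_levelSet (by omega) hFnonneg hFcont hsm hdiff hx hx' ht⟩

/-- Let `F : ℝ₊^p → ℝ₊` (`p ≥ 2`) be continuous with `F 0 = 0` and
nondecreasing w.r.t. the componentwise order, and set `L(γ) = {x ∈ ℝ₊^p : F x ≥ γ}`,
`Γ_F = {γ > 0 : L(γ) ≠ ∅}`.
(a) If `F` is strictly quasiconcave on `{x ∈ ℝ₊^p : F x > 0}`, then for every `γ ∈ Γ_F`
the support function `σ_{L(γ)}` is differentiable at every point of `-ℝ₊₊^p`.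
(b) If `F(x) > F(x')` whenever `x ≥ x'`, `x ≠ x'` and `F x' > 0`, and `σ_{L(γ)}` is
differentiable on `-ℝ₊₊^p` for every `γ ∈ Γ_F`, then `F` is quasiconcave. -/
theorem stmt19 (p : ℕ) (hp : 2 ≤ p)
    (F : EuclideanSpace ℝ (Fin p) → ℝ)
    (hFnonneg : ∀ x : EuclideanSpace ℝ (Fin p), (∀ i, 0 ≤ x i) → 0 ≤ F x)
    (hFcont : ContinuousOn F {x : EuclideanSpace ℝ (Fin p) | ∀ i, 0 ≤ x i})
    (hF0 : F 0 = 0)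
    (hmono : ∀ x x' : EuclideanSpace ℝ (Fin p),
      (∀ i, 0 ≤ x' i) → (∀ i, x' i ≤ x i) → F x' ≤ F x) :
    ((∀ x x' : EuclideanSpace ℝ (Fin p),
        (∀ i, 0 ≤ x i) → 0 < F x → (∀ i, 0 ≤ x' i) → 0 < F x' → x ≠ x' →
        ∀ t : ℝ, t ∈ Ioo (0 : ℝ) 1 →
          min (F x) (F x') < F (t • x + (1 - t) • x')) →
      ∀ γ : ℝ, 0 < γ → (levelSet F γ).Nonempty →
        ∀ y : EuclideanSpace ℝ (Fin p), (∀ i, y i < 0) → SigmaDiffAtE (levelSet F γ) y) ∧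
    ((∀ x x' : EuclideanSpace ℝ (Fin p),
        (∀ i, 0 ≤ x' i) → (∀ i, x' i ≤ x i) → x ≠ x' → 0 < F x' → F x' < F x) →
      (∀ γ : ℝ, 0 < γ → (levelSet F γ).Nonempty →
        ∀ y : EuclideanSpace ℝ (Fin p), (∀ i, y i < 0) → SigmaDiffAtE (levelSet F γ) y) →
      ∀ x x' : EuclideanSpace ℝ (Fin p), (∀ i, 0 ≤ x i) → (∀ i, 0 ≤ x' i) →
        ∀ t : ℝ, t ∈ Icc (0 : ℝ) 1 →
          min (F x) (F x') ≤ F (t • x + (1 - t) • x')) :=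
  stmt19_general p hp F hFnonneg hFcont hF0
end
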